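/- arXiv:2506.07377 — 4 statements merged into one kernel-verified Lean document; each statement's English description precedes it below -/
import Mathlib

section
/- Let T be a proper infinite rooted tree and let ρ be a density on T. Then the sequence n ↦ ℓ_ρ(Γ_n) is non-decreasing and lim_{n→∞} ℓ_ρ(Γ_n) = ℓ_ρ(Γ_∞), where both sides are taken in the extended nonnegative reals [0,∞]. -/
open scoped ENNReal NNReal

/-- A proper infinite rooted tree, modeled as a prefix-closed set of finite lists of
naturals in which every node has at least one and finitely many children. -/
structure PTree where
  mem : List ℕ → Prop
  root_mem : mem []
  prefix_closed : ∀ ⦃l₁ l₂ : List ℕ⦄, l₁ <+: l₂ → mem l₂ → mem l₁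
  child_exists : ∀ ⦃l⦄, mem l → ∃ a, mem (l ++ [a])
  finite_children : ∀ ⦃l⦄, mem l → {a : ℕ | mem (l ++ [a])}.Finite

/-- The initial segment of length `n` of `f : ℕ → ℕ`, as a list. -/
def seg (f : ℕ → ℕ) (n : ℕ) : List ℕ := (List.range n).map f

namespace PTree

variable (T : PTree)

/-- The edges of the tree: the nonempty lists in `T`. -/
def Edge : Type := {e : List ℕ // T.mem e ∧ e ≠ []}

/-- The family `Γ_∞` of infinite descending paths: functions all of whose
finite initial segments lie in `T`. -/
def GammaInf : Set (ℕ → ℕ) := {f | ∀ n, T.mem (seg f n)}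

/-- `ρ`-length of the infinite descending path determined by `f`: the sum of `ρ`
over the nonempty initial segments of `f`. -/
noncomputable def lenInf (ρ : List ℕ → ℝ≥0) (f : ℕ → ℕ) : ℝ≥0∞ :=
  ∑' n : ℕ, (ρ (seg f (n + 1)) : ℝ≥0∞)

/-- `ρ`-length of the finite descending path `γ_e` consisting of the nonempty
prefixes of the edge `e`. -/
noncomputable def lenFin (ρ : List ℕ → ℝ≥0) (e : List ℕ) : ℝ≥0∞ :=
  ∑ k ∈ Finset.range e.length, (ρ (e.take (k + 1)) : ℝ≥0∞)

/-- Admissible densities for the family `Γ_n` (identified with the shell `S_n`). -/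
def AdmFin (n : ℕ) : Set (List ℕ → ℝ≥0) :=
  {ρ | ∀ e : List ℕ, T.mem e → e.length = n → 1 ≤ lenFin ρ e}

/-- Admissible densities for the family `Γ_∞`. -/
def AdmInf : Set (List ℕ → ℝ≥0) :=
  {ρ | ∀ f ∈ T.GammaInf, 1 ≤ lenInf ρ f}

/-- The `p`-energy of a density `ρ` with respect to the weight `σ`. -/
noncomputable def energy (p : ℝ) (σ ρ : List ℕ → ℝ≥0) : ℝ≥0∞ :=
  ∑' e : T.Edge, (σ e.1 : ℝ≥0∞) * (ρ e.1 : ℝ≥0∞) ^ p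

/-- The `∞`-energy of a density `ρ` with respect to the weight `σ`. -/
noncomputable def energyTop (σ ρ : List ℕ → ℝ≥0) : ℝ≥0∞ :=
  ⨆ e : T.Edge, (σ e.1 : ℝ≥0∞) * (ρ e.1 : ℝ≥0∞)

/-- The `p`-modulus of the family `Γ_n`. -/
noncomputable def ModFin (p : ℝ) (σ : List ℕ → ℝ≥0) (n : ℕ) : ℝ≥0∞ :=
  ⨅ ρ ∈ T.AdmFin n, T.energy p σ ρ

/-- The `p`-modulus of the family `Γ_∞`. -/
noncomputable def ModInf (p : ℝ) (σ : List ℕ → ℝ≥0) : ℝ≥0∞ :=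
  ⨅ ρ ∈ T.AdmInf, T.energy p σ ρ

/-- The `∞`-modulus of the family `Γ_∞`. -/
noncomputable def ModTop (σ : List ℕ → ℝ≥0) : ℝ≥0∞ :=
  ⨅ ρ ∈ T.AdmInf, T.energyTop σ ρ

end PTree

namespace PTree

variable (T : PTree)

/-- The `ρ`-length of the family `Γ_n`: the infimum of the `ρ`-lengths of the
descending paths terminating at an edge of the shell `S_n`. -/
noncomputable def lenFam (ρ : List ℕ → ℝ≥0) (n : ℕ) : ℝ≥0∞ :=
  ⨅ e ∈ {l : List ℕ | T.mem l ∧ l.length = n}, lenFin ρ e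

/-- The `ρ`-length of the family `Γ_∞`. -/
noncomputable def lenFamInf (ρ : List ℕ → ℝ≥0) : ℝ≥0∞ :=
  ⨅ f ∈ T.GammaInf, lenInf ρ f

end PTree

/-! Truncating a path shortens it, so `n ↦ ℓ_ρ(Γ_n)` is monotone and bounded by `ℓ_ρ(Γ_∞)`.
Conversely, every shell is finite, so each `ℓ_ρ(Γ_n)` is attained by an edge whose length is at
most `L = ⨆ n, ℓ_ρ(Γ_n)`. Such edges, under truncation, form a finitely branching inverse system;
by König's lemma it has a thread, which is an infinite path of length at most `L`. -/

lemma seg_length (f : ℕ → ℕ) (n : ℕ) : (seg f n).length = n := by simp [seg]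

lemma seg_take (f : ℕ → ℕ) {m n : ℕ} (h : m ≤ n) : (seg f n).take m = seg f m := by
  simp [seg, ← List.map_take, List.take_range, Nat.min_eq_left h]

lemma exists_seg_eq {L : ℕ → List ℕ} (hlen : ∀ n, (L n).length = n)
    (htake : ∀ m n, m ≤ n → (L n).take m = L m) : ∃ f, ∀ n, seg f n = L n := by
  refine ⟨fun k => (L (k + 1)).getD k 0, fun n => List.ext_getElem (by simp [seg_length, hlen]) ?_⟩
  intro k hk _
  rw [seg_length] at hk
  simp only [seg, List.getElem_map, List.getElem_range]
  rw [← htake (k + 1) n hk, List.getD_eq_getElem _ _ (by simp [hlen, hk])]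
  simp

namespace PTree

lemma lenFin_le_of_prefix (ρ : List ℕ → ℝ≥0) {e₁ e₂ : List ℕ} (h : e₁ <+: e₂) :
    lenFin ρ e₁ ≤ lenFin ρ e₂ := by
  unfold lenFin
  calc ∑ k ∈ Finset.range e₁.length, (ρ (e₁.take (k + 1)) : ℝ≥0∞)
      = ∑ k ∈ Finset.range e₁.length, (ρ (e₂.take (k + 1)) : ℝ≥0∞) := by
        refine Finset.sum_congr rfl fun k hk => ?_
        rw [List.prefix_iff_eq_take.mp h, List.take_take, Nat.min_eq_left (Finset.mem_range.mp hk)]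
    _ ≤ _ := Finset.sum_le_sum_of_subset (Finset.range_subset_range.mpr h.length_le)

lemma lenFin_seg (ρ : List ℕ → ℝ≥0) (f : ℕ → ℕ) (n : ℕ) :
    lenFin ρ (seg f n) = ∑ k ∈ Finset.range n, (ρ (seg f (k + 1)) : ℝ≥0∞) := by
  unfold lenFin
  rw [seg_length]
  exact Finset.sum_congr rfl fun k hk => by rw [seg_take _ (Finset.mem_range.mp hk)]

lemma lenInf_eq_iSup_lenFin_seg (ρ : List ℕ → ℝ≥0) (f : ℕ → ℕ) :
    lenInf ρ f = ⨆ n, lenFin ρ (seg f n) := by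
  simp only [lenInf, ENNReal.tsum_eq_iSup_nat, lenFin_seg]

variable (T : PTree)

def shell (n : ℕ) : Set (List ℕ) := {l | T.mem l ∧ l.length = n}

lemma shell_nonempty (n : ℕ) : (T.shell n).Nonempty := by
  induction n with
  | zero => exact ⟨[], T.root_mem, rfl⟩
  | succ n ih =>
    obtain ⟨e, he, hl⟩ := ih
    obtain ⟨a, ha⟩ := T.child_exists he
    exact ⟨e ++ [a], ha, by simp [hl]⟩

lemma shell_succ_subset (n : ℕ) :
    T.shell (n + 1) ⊆ ⋃ e ∈ T.shell n, (fun a => e ++ [a]) '' {a | T.mem (e ++ [a])} := by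
  rintro l ⟨hl, hlen⟩
  have hne : l ≠ [] := List.ne_nil_of_length_eq_add_one hlen
  have hsplit := List.dropLast_append_getLast hne
  refine Set.mem_biUnion (x := l.dropLast) ⟨T.prefix_closed (List.dropLast_prefix l) hl, ?_⟩ ?_
  · simp [hlen]
  · exact ⟨l.getLast hne, by rw [Set.mem_ofPred_eq, hsplit]; exact hl, hsplit⟩

lemma shell_finite (n : ℕ) : (T.shell n).Finite := by
  induction n with
  | zero =>
    refine (Set.finite_singleton []).subset ?_
    rintro l ⟨-, hl⟩
    exact List.length_eq_zero_iff.mp hl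
  | succ n ih =>
    exact (ih.biUnion fun e he => (T.finite_children he.1).image _).subset (T.shell_succ_subset n)

lemma lenFam_le_lenFin (ρ : List ℕ → ℝ≥0) {n : ℕ} {e : List ℕ} (he : e ∈ T.shell n) :
    T.lenFam ρ n ≤ lenFin ρ e :=
  biInf_le _ he

lemma lenFam_mono (ρ : List ℕ → ℝ≥0) : Monotone (T.lenFam ρ) := by
  intro m n hmn
  refine le_iInf₂ fun e ⟨he, hlen⟩ => ?_
  have hpre := List.take_prefix m e
  calc T.lenFam ρ m ≤ lenFin ρ (e.take m) :=
        T.lenFam_le_lenFin ρ ⟨T.prefix_closed hpre he, by simp [hlen, hmn]⟩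
    _ ≤ lenFin ρ e := lenFin_le_of_prefix ρ hpre

lemma exists_mem_shell_lenFin_le_lenFam (ρ : List ℕ → ℝ≥0) (n : ℕ) :
    ∃ e ∈ T.shell n, lenFin ρ e ≤ T.lenFam ρ n := by
  obtain ⟨e, he, hmin⟩ :=
    Set.exists_min_image _ (lenFin ρ) (T.shell_finite n) (T.shell_nonempty n)
  exact ⟨e, he, le_iInf₂ hmin⟩

lemma exists_mem_gammaInf_lenInf_le (ρ : List ℕ → ℝ≥0) (B : ℝ≥0∞)
    (hB : ∀ n, ∃ e ∈ T.shell n, lenFin ρ e ≤ B) :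
    ∃ f ∈ T.GammaInf, lenInf ρ f ≤ B := by
  let α (n : ℕ) := {e // e ∈ T.shell n ∧ lenFin ρ e ≤ B}
  have : ∀ n, Finite (α n) := fun n => ((T.shell_finite n).subset fun _ h => h.1).to_subtype
  have : ∀ n, Nonempty (α n) := fun n =>
    let ⟨e, he, hle⟩ := hB n
    ⟨⟨e, he, hle⟩⟩
  let π {m n : ℕ} (hmn : m ≤ n) (e : α n) : α m :=
    ⟨e.1.take m, ⟨T.prefix_closed (List.take_prefix m e.1) e.2.1.1, by simp [e.2.1.2, hmn]⟩,
      (lenFin_le_of_prefix ρ (List.take_prefix m e.1)).trans e.2.2⟩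
  obtain ⟨L, hL⟩ := exists_seq_forall_proj_of_forall_finite @π
    (fun n e => Subtype.ext (List.take_of_length_le e.2.1.2.le))
    (fun _ _ _ hmn _ e => Subtype.ext (by simp [π, List.take_take, Nat.min_eq_left hmn]))
    (fun _ _ => Set.toFinite _)
  obtain ⟨f, hf⟩ := exists_seg_eq (L := fun n => (L n).1) (fun n => (L n).2.1.2)
    (fun m n hmn => congrArg Subtype.val (hL hmn))
  refine ⟨f, fun n => hf n ▸ (L n).2.1.1, ?_⟩
  rw [lenInf_eq_iSup_lenFin_seg]
  exact iSup_le fun n => hf n ▸ (L n).2.2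

lemma lenFam_le_lenFamInf (ρ : List ℕ → ℝ≥0) (n : ℕ) : T.lenFam ρ n ≤ T.lenFamInf ρ := by
  refine le_iInf₂ fun f hf => ?_
  calc T.lenFam ρ n ≤ lenFin ρ (seg f n) := T.lenFam_le_lenFin ρ ⟨hf n, seg_length f n⟩
    _ ≤ lenInf ρ f := by
      rw [lenInf_eq_iSup_lenFin_seg]
      exact le_iSup (fun n => lenFin ρ (seg f n)) n

lemma lenFamInf_eq_iSup_lenFam (ρ : List ℕ → ℝ≥0) : T.lenFamInf ρ = ⨆ n, T.lenFam ρ n := by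
  refine le_antisymm ?_ (iSup_le (T.lenFam_le_lenFamInf ρ))
  obtain ⟨f, hf, hfB⟩ := T.exists_mem_gammaInf_lenInf_le ρ (⨆ n, T.lenFam ρ n) fun n =>
    let ⟨e, he, hle⟩ := T.exists_mem_shell_lenFin_le_lenFam ρ n
    ⟨e, he, hle.trans (le_iSup (T.lenFam ρ) n)⟩
  exact (biInf_le _ hf).trans hfB

end PTree

/-- `n ↦ ℓ_ρ(Γ_n)` is non-decreasing and converges to `ℓ_ρ(Γ_∞)`. -/
theorem stmt1 (T : PTree) (ρ : List ℕ → ℝ≥0) :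
    (∀ m n : ℕ, 1 ≤ m → m ≤ n → T.lenFam ρ m ≤ T.lenFam ρ n) ∧
    Filter.Tendsto (fun n : ℕ => T.lenFam ρ n) Filter.atTop
      (nhds (T.lenFamInf ρ)) :=
  ⟨fun _ _ _ hmn => T.lenFam_mono ρ hmn,
    T.lenFamInf_eq_iSup_lenFam ρ ▸ tendsto_atTop_iSup (T.lenFam_mono ρ)⟩
end

section
/- Let p ∈ (1,∞), let s : {1,2,...} → ℕ satisfy s_k ≥ 1, and let σ : {1,2,...} → ℝ satisfy σ_k > 0. Then the infimum defining M_p(σ,s) is attained — i.e., there exists ρ : {1,2,...} → [0,∞) with Σ_{k≥1} ρ_k ≥ 1 and Σ_{k≥1} s_k σ_k ρ_k^p = M_p(σ,s) — if and only if M_p(σ,s) > 0. -/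
/-!
Write `w k = s k * σ k`. Hölder's inequality with exponents `p` and `p / (p - 1)` gives
`(∑ ρ)^p ≤ (∑ w ρ^p) * (∑ w^(-1/(p-1)))^(p-1)`, with equality for `ρ` proportional to
`w^(-1/(p-1))`. Normalising this density, or its truncations when its sum diverges, shows
`M_p = (∑ w^(-1/(p-1)))^(1-p)`. If the sum is finite the normalised density is a minimiser;
if it diverges then `M_p = ⊤^(1-p) = 0`, which no admissible density attains.
-/

open scoped ENNReal NNReal

/-- The radially symmetric `p`-modulus `M_p(σ, s)` of the family of infinite
descending paths in a radially symmetric infinite tree whose `k`-th shell has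
`s k` edges, each of weight `σ k`: the infimum of the `p`-energies
`Σ_k s_k σ_k ρ_k^p` over all densities `ρ` with `Σ_k ρ_k ≥ 1`. -/
noncomputable def Mmod (p : ℝ) (σ : ℕ → ℝ≥0) (s : ℕ → ℕ) : ℝ≥0∞ :=
  ⨅ ρ ∈ {ρ : ℕ → ℝ≥0 | 1 ≤ ∑' k : ℕ, (ρ k : ℝ≥0∞)},
    ∑' k : ℕ, (s k : ℝ≥0∞) * (σ k : ℝ≥0∞) * (ρ k : ℝ≥0∞) ^ p

open MeasureTheory in
theorem ENNReal.inner_le_Lp_mul_Lq_tsum {p q : ℝ} (hpq : p.HolderConjugate q) (f g : ℕ → ℝ≥0∞) :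
    ∑' k, f k * g k ≤ (∑' k, f k ^ p) ^ (1 / p) * (∑' k, g k ^ q) ^ (1 / q) := by
  simpa [lintegral_count] using ENNReal.lintegral_mul_le_Lp_mul_Lq Measure.count hpq
    measurable_from_nat.aemeasurable measurable_from_nat.aemeasurable

namespace RadialModulus

noncomputable def modulus (p : ℝ) (w : ℕ → ℝ≥0∞) : ℝ≥0∞ :=
  ⨅ ρ ∈ {ρ : ℕ → ℝ≥0 | 1 ≤ ∑' k, (ρ k : ℝ≥0∞)}, ∑' k, w k * (ρ k : ℝ≥0∞) ^ p

theorem Mmod_eq_modulus (p : ℝ) (σ : ℕ → ℝ≥0) (s : ℕ → ℕ) :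
    Mmod p σ s = modulus p (fun k => s k * σ k) :=
  rfl

noncomputable def dualWeight (p : ℝ) (w : ℕ → ℝ≥0∞) (k : ℕ) : ℝ≥0∞ :=
  w k ^ (-(p - 1)⁻¹)

variable {p : ℝ} {w : ℕ → ℝ≥0∞}

theorem modulus_le {ρ : ℕ → ℝ≥0} (hρ : 1 ≤ ∑' k, (ρ k : ℝ≥0∞)) :
    modulus p w ≤ ∑' k, w k * (ρ k : ℝ≥0∞) ^ p :=
  iInf₂_le ρ hρ

theorem dualWeight_ne_zero (hw₀ : ∀ k, w k ≠ 0) (hw : ∀ k, w k ≠ ⊤) (k : ℕ) :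
    dualWeight p w k ≠ 0 := by
  simp [dualWeight, hw₀ k, hw k]

theorem dualWeight_ne_top (hw₀ : ∀ k, w k ≠ 0) (hw : ∀ k, w k ≠ ⊤) (k : ℕ) :
    dualWeight p w k ≠ ⊤ := by
  simp [dualWeight, hw₀ k, hw k]

theorem tsum_dualWeight_ne_zero (hw₀ : ∀ k, w k ≠ 0) (hw : ∀ k, w k ≠ ⊤) :
    ∑' k, dualWeight p w k ≠ 0 :=
  fun h => dualWeight_ne_zero hw₀ hw 0 (ENNReal.tsum_eq_zero.mp h 0)

theorem mul_dualWeight_rpow (hw₀ : ∀ k, w k ≠ 0) (hw : ∀ k, w k ≠ ⊤) (hp : p ≠ 1) (k : ℕ) :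
    w k * dualWeight p w k ^ p = dualWeight p w k := by
  have hp' : p - 1 ≠ 0 := sub_ne_zero.mpr hp
  calc w k * (w k ^ (-(p - 1)⁻¹)) ^ p
      = w k ^ (1 + -(p - 1)⁻¹ * p) := by
        rw [ENNReal.rpow_add _ _ (hw₀ k) (hw k), ENNReal.rpow_one, ENNReal.rpow_mul]
    _ = w k ^ (-(p - 1)⁻¹) := by congr 1; field_simp; ring

theorem rpow_tsum_le_mul (hp : 1 < p) (hw₀ : ∀ k, w k ≠ 0) (hw : ∀ k, w k ≠ ⊤)
    (f : ℕ → ℝ≥0∞) :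
    (∑' k, f k) ^ p ≤ (∑' k, w k * f k ^ p) * (∑' k, dualWeight p w k) ^ (p - 1) := by
  have hp₀ : 0 < p := by linarith
  have hpq : p.HolderConjugate (p / (p - 1)) := .conjExponent hp
  have hsplit : ∀ k, f k = (w k ^ (1 / p) * f k) * w k ^ (-(1 / p)) := fun k => by
    rw [mul_right_comm, ← ENNReal.rpow_add _ _ (hw₀ k) (hw k)]
    simp
  have hfirst : ∀ k, (w k ^ (1 / p) * f k) ^ p = w k * f k ^ p := fun k => by
    rw [ENNReal.mul_rpow_of_nonneg _ _ hp₀.le, ← ENNReal.rpow_mul, one_div_mul_cancel hp₀.ne',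
      ENNReal.rpow_one]
  have hsecond : ∀ k, (w k ^ (-(1 / p))) ^ (p / (p - 1)) = dualWeight p w k := fun k => by
    rw [dualWeight, ← ENNReal.rpow_mul]
    congr 1
    field_simp
  have holder := ENNReal.inner_le_Lp_mul_Lq_tsum hpq (fun k => w k ^ (1 / p) * f k)
    (fun k => w k ^ (-(1 / p)))
  simp only [← hsplit, hfirst, hsecond] at holder
  calc (∑' k, f k) ^ p
      ≤ ((∑' k, w k * f k ^ p) ^ (1 / p) * (∑' k, dualWeight p w k) ^ (1 / (p / (p - 1)))) ^ p :=
        ENNReal.rpow_le_rpow holder hp₀.le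
    _ = (∑' k, w k * f k ^ p) * (∑' k, dualWeight p w k) ^ (p - 1) := by
        rw [ENNReal.mul_rpow_of_nonneg _ _ hp₀.le, ← ENNReal.rpow_mul, ← ENNReal.rpow_mul,
          one_div_mul_cancel hp₀.ne', ENNReal.rpow_one]
        congr 2
        field_simp

theorem rpow_tsum_dualWeight_le_modulus (hp : 1 < p) (hw₀ : ∀ k, w k ≠ 0)
    (hw : ∀ k, w k ≠ ⊤) : (∑' k, dualWeight p w k) ^ (1 - p) ≤ modulus p w := by
  refine le_iInf₂ fun ρ (hρ : 1 ≤ ∑' k, (ρ k : ℝ≥0∞)) => ?_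
  have h : 1 ≤ (∑' k, dualWeight p w k) ^ (p - 1) * ∑' k, w k * (ρ k : ℝ≥0∞) ^ p := by
    rw [mul_comm]
    calc 1 ≤ (∑' k, (ρ k : ℝ≥0∞)) ^ p := ENNReal.one_le_rpow hρ (by linarith)
      _ ≤ _ := rpow_tsum_le_mul hp hw₀ hw _
  rw [show 1 - p = -(p - 1) by ring, ENNReal.rpow_neg]
  exact (ENNReal.inv_le_iff_le_mul (fun _ h0 => by simp [h0] at h)
    (fun _ h0 => by simp [h0] at h)).mpr h

theorem exists_admissible_energy_eq (hp : 0 ≤ p) {b : ℕ → ℝ≥0∞}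
    (hb : ∀ k, w k * b k ^ p = b k) (hb_top : ∀ k, b k ≠ ⊤)
    (h₀ : ∑' k, b k ≠ 0) (h_top : ∑' k, b k ≠ ⊤) :
    ∃ ρ : ℕ → ℝ≥0, 1 ≤ ∑' k, (ρ k : ℝ≥0∞) ∧
      ∑' k, w k * (ρ k : ℝ≥0∞) ^ p = (∑' k, b k) ^ (1 - p) := by
  generalize hT : ∑' k, b k = T at h₀ h_top ⊢
  have hρ : ∀ k, ((b k / T).toNNReal : ℝ≥0∞) = b k / T := fun k =>
    ENNReal.coe_toNNReal (ENNReal.div_ne_top (hb_top k) h₀)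
  refine ⟨fun k => (b k / T).toNNReal, ?_, ?_⟩
  · simp_rw [hρ, div_eq_mul_inv, ENNReal.tsum_mul_right, hT, ENNReal.mul_inv_cancel h₀ h_top,
      le_refl]
  · simp_rw [hρ, ENNReal.div_rpow_of_nonneg _ _ hp, ← mul_div_assoc, hb, div_eq_mul_inv,
      ENNReal.tsum_mul_right, hT, ← div_eq_mul_inv, ENNReal.rpow_sub _ _ h₀ h_top, ENNReal.rpow_one]

theorem modulus_le_rpow_sum_range (hp : 1 < p) (hw₀ : ∀ k, w k ≠ 0) (hw : ∀ k, w k ≠ ⊤)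
    (n : ℕ) : modulus p w ≤ (∑ k ∈ Finset.range (n + 1), dualWeight p w k) ^ (1 - p) := by
  set t : Set ℕ := ↑(Finset.range (n + 1))
  set b := t.indicator (dualWeight p w)
  have hb : ∀ k, w k * b k ^ p = b k := fun k => by
    by_cases hk : k ∈ t
    · simp only [b, Set.indicator_of_mem hk, mul_dualWeight_rpow hw₀ hw hp.ne']
    · simp only [b, Set.indicator_of_notMem hk, ENNReal.zero_rpow_of_pos (by linarith), mul_zero]
  have hsum : ∑' k, b k = ∑ k ∈ Finset.range (n + 1), dualWeight p w k :=
    (sum_eq_tsum_indicator _ _).symm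
  obtain ⟨ρ, hρ, hE⟩ := exists_admissible_energy_eq (by linarith) hb
    (fun k => by by_cases hk : k ∈ t <;> simp [b, hk, dualWeight_ne_top hw₀ hw])
    (by simpa [hsum] using ⟨0, by simp, dualWeight_ne_zero hw₀ hw 0⟩)
    (by simpa [hsum] using fun k _ => dualWeight_ne_top hw₀ hw k)
  exact hsum ▸ hE ▸ modulus_le hρ

open Filter Topology in
theorem modulus_eq (hp : 1 < p) (hw₀ : ∀ k, w k ≠ 0) (hw : ∀ k, w k ≠ ⊤) :
    modulus p w = (∑' k, dualWeight p w k) ^ (1 - p) := by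
  refine le_antisymm ?_ (rpow_tsum_dualWeight_le_modulus hp hw₀ hw)
  have hlim : Tendsto (fun n => (∑ k ∈ Finset.range (n + 1), dualWeight p w k) ^ (1 - p))
      atTop (𝓝 ((∑' k, dualWeight p w k) ^ (1 - p))) :=
    (ENNReal.continuous_rpow_const.tendsto _).comp
      ((ENNReal.tendsto_nat_tsum _).comp (tendsto_add_atTop_nat 1))
  exact ge_of_tendsto' hlim (modulus_le_rpow_sum_range hp hw₀ hw)

theorem exists_energy_eq_modulus (hp : 1 < p) (hw₀ : ∀ k, w k ≠ 0) (hw : ∀ k, w k ≠ ⊤)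
    (h_top : ∑' k, dualWeight p w k ≠ ⊤) :
    ∃ ρ : ℕ → ℝ≥0, 1 ≤ ∑' k, (ρ k : ℝ≥0∞) ∧ ∑' k, w k * (ρ k : ℝ≥0∞) ^ p = modulus p w := by
  rw [modulus_eq hp hw₀ hw]
  exact exists_admissible_energy_eq (by linarith) (mul_dualWeight_rpow hw₀ hw hp.ne')
    (dualWeight_ne_top hw₀ hw) (tsum_dualWeight_ne_zero hw₀ hw) h_top

theorem energy_ne_zero (hp : 0 < p) (hw₀ : ∀ k, w k ≠ 0) {ρ : ℕ → ℝ≥0}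
    (hρ : 1 ≤ ∑' k, (ρ k : ℝ≥0∞)) : ∑' k, w k * (ρ k : ℝ≥0∞) ^ p ≠ 0 := by
  intro h
  have hρ₀ : ∀ k, (ρ k : ℝ≥0∞) = 0 := fun k => by
    simpa [hw₀ k, hp, hp.not_gt] using ENNReal.tsum_eq_zero.mp h k
  simp [hρ₀] at hρ

end RadialModulus

/-- the infimum defining `M_p(σ, s)` is attained iff `M_p(σ, s) > 0`. -/
theorem stmt5 (p : ℝ) (hp : 1 < p)
    (s : ℕ → ℕ) (hs : ∀ k, 1 ≤ s k) (σ : ℕ → ℝ≥0) (hσ : ∀ k, 0 < σ k) :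
    (∃ ρ : ℕ → ℝ≥0, 1 ≤ (∑' k : ℕ, (ρ k : ℝ≥0∞)) ∧
        (∑' k : ℕ, (s k : ℝ≥0∞) * (σ k : ℝ≥0∞) * (ρ k : ℝ≥0∞) ^ p) = Mmod p σ s) ↔
      0 < Mmod p σ s := by
  have hw₀ : ∀ k, (s k : ℝ≥0∞) * σ k ≠ 0 := fun k =>
    mul_ne_zero (by simpa using Nat.one_le_iff_ne_zero.mp (hs k)) (by simpa using (hσ k).ne')
  have hw : ∀ k, (s k : ℝ≥0∞) * σ k ≠ ⊤ := fun k => by finiteness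
  rw [RadialModulus.Mmod_eq_modulus]
  constructor
  · rintro ⟨ρ, hρ, hE⟩
    exact hE ▸ pos_iff_ne_zero.mpr (RadialModulus.energy_ne_zero (by linarith) hw₀ hρ)
  · intro hM
    refine RadialModulus.exists_energy_eq_modulus hp hw₀ hw fun h_top => hM.ne' ?_
    rw [RadialModulus.modulus_eq hp hw₀ hw, h_top, ENNReal.top_rpow_of_neg (by linarith)]
end

section
/- Let T be a proper infinite rooted tree with constant weight σ ≡ 1. Then Mod_{1,1}(Γ_∞) = |S_1|, the number of edges in the first shell. -/
/-!
The indicator of the first shell is admissible, so the modulus is at most `|S_1|`.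
Conversely, choosing a child at every step extends each node to an infinite path. Paths
through distinct edges of `S_1` are edge-disjoint, so for an admissible `ρ` the total mass
`∑ ρ` is at least the sum of the `|S_1|` path lengths, each of which is at least `1`.
-/

open scoped ENNReal NNReal

lemma seg_succ (f : ℕ → ℕ) (n : ℕ) : seg f (n + 1) = seg f n ++ [f n] := by
  simp [seg, List.range_succ]

lemma take_seg (f : ℕ → ℕ) (m n : ℕ) : (seg f n).take m = seg f (min m n) := by
  simp [seg, ← List.map_take, List.take_range]

lemma List.IsPrefix.take_eq_take {α : Type*} {l₁ l₂ : List α} (h : l₁ <+: l₂) {n : ℕ}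
    (hn : n ≤ l₁.length) : l₁.take n = l₂.take n := by
  rw [List.prefix_iff_eq_take.mp h, List.take_take, min_eq_left hn]

lemma exists_seg_eq_take_of_prefix_chain (L : ℕ → List ℕ) (hL : ∀ n, L n <+: L (n + 1))
    (hlen : ∀ n, n ≤ (L n).length) : ∃ f : ℕ → ℕ, ∀ n, seg f n = (L n).take n := by
  refine ⟨fun i => (L (i + 1)).getD i 0, fun n => ?_⟩
  induction n with
  | zero => simp [seg]
  | succ n ih =>
    have hn : n < (L (n + 1)).length := hlen (n + 1)
    rw [seg_succ, ih, (hL n).take_eq_take (hlen n), List.getD_eq_getElem _ _ hn,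
      List.take_append_getElem hn]

lemma prefix_of_le_of_prefix_succ {α : Type*} (L : ℕ → List α) (hL : ∀ n, L n <+: L (n + 1))
    {m n : ℕ} (h : m ≤ n) : L m <+: L n := by
  induction n, h using Nat.le_induction with
  | base => exact List.prefix_refl _
  | succ n _ ih => exact ih.trans (hL n)

def shellIndicator (n : ℕ) (l : List ℕ) : ℝ≥0 := if l.length = n then 1 else 0

namespace PTree

variable (T : PTree)

noncomputable def growChild (l : {l : List ℕ // T.mem l}) : {l : List ℕ // T.mem l} :=
  ⟨l.1 ++ [(T.child_exists l.2).choose], (T.child_exists l.2).choose_spec⟩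

lemma length_growChild_iterate (l : {l : List ℕ // T.mem l}) (n : ℕ) :
    (T.growChild^[n] l).1.length = l.1.length + n := by
  induction n with
  | zero => rfl
  | succ n ih => simp [Function.iterate_succ_apply', growChild, ih, Nat.add_assoc]

lemma prefix_growChild_iterate_succ (l : {l : List ℕ // T.mem l}) (n : ℕ) :
    (T.growChild^[n] l).1 <+: (T.growChild^[n + 1] l).1 := by
  rw [Function.iterate_succ_apply']
  exact List.prefix_append _ _

theorem exists_mem_gammaInf_seg_eq {l : List ℕ} (hl : T.mem l) :
    ∃ f ∈ T.GammaInf, seg f l.length = l := by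
  set L : ℕ → List ℕ := fun n => (T.growChild^[n] ⟨l, hl⟩).1
  have hL : ∀ n, L n <+: L (n + 1) := T.prefix_growChild_iterate_succ ⟨l, hl⟩
  have hlen : ∀ n, (L n).length = l.length + n := T.length_growChild_iterate ⟨l, hl⟩
  obtain ⟨f, hf⟩ := exists_seg_eq_take_of_prefix_chain L hL (fun n => by rw [hlen]; omega)
  refine ⟨f, fun n => ?_, ?_⟩
  · rw [hf]
    exact T.prefix_closed (List.take_prefix n (L n)) (T.growChild^[n] ⟨l, hl⟩).2
  · rw [hf]
    exact (List.prefix_iff_eq_take.mp (prefix_of_le_of_prefix_succ L hL l.length.zero_le)).symm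

/-- The shell `S_n` for `n ≠ 0`; `Shell 0` is the root, which is not an edge. -/
abbrev Shell (n : ℕ) : Type := {e : List ℕ // T.mem e ∧ e.length = n}

theorem finite_shell (n : ℕ) : {e : List ℕ | T.mem e ∧ e.length = n}.Finite := by
  induction n with
  | zero => exact (Set.finite_singleton []).subset fun e he => List.eq_nil_of_length_eq_zero he.2
  | succ n ih =>
    refine (ih.biUnion fun l hl => (T.finite_children hl.1).image fun a => l ++ [a]).subset ?_
    rintro e ⟨he, hlen⟩
    obtain rfl | ⟨l, a, rfl⟩ := e.eq_nil_or_concat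
    · simp at hlen
    rw [List.concat_eq_append] at he hlen ⊢
    simp only [List.length_append, List.length_singleton, Nat.add_right_cancel_iff] at hlen
    exact Set.mem_biUnion ⟨T.prefix_closed (List.prefix_append _ _) he, hlen⟩ ⟨a, he, rfl⟩

instance (n : ℕ) : Finite (T.Shell n) := (T.finite_shell n).to_subtype

lemma shellIndicator_mem_admInf {n : ℕ} (hn : n ≠ 0) : shellIndicator n ∈ T.AdmInf := fun f _ =>
  calc (1 : ℝ≥0∞) = shellIndicator n (seg f (n - 1 + 1)) := by
        simp [shellIndicator, seg_length, Nat.sub_add_cancel (Nat.pos_of_ne_zero hn)]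
    _ ≤ lenInf (shellIndicator n) f := ENNReal.le_tsum (n - 1)

lemma energy_one_one (ρ : List ℕ → ℝ≥0) :
    T.energy 1 (fun _ => 1) ρ = ∑' e : T.Edge, (ρ e.1 : ℝ≥0∞) := by
  simp [energy]

def edgeShellEquiv {n : ℕ} (hn : n ≠ 0) : {e : T.Edge // e.1.length = n} ≃ T.Shell n where
  toFun e := ⟨e.1.1, e.1.2.1, e.2⟩
  invFun e := ⟨⟨e.1, e.2.1, fun h => hn (by simpa [h] using e.2.2.symm)⟩, e.2.2⟩

lemma tsum_shellIndicator {n : ℕ} (hn : n ≠ 0) :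
    ∑' e : T.Edge, (shellIndicator n e.1 : ℝ≥0∞) = Nat.card (T.Shell n) := by
  have : Fintype (T.Shell n) := Fintype.ofFinite _
  calc ∑' e : T.Edge, (shellIndicator n e.1 : ℝ≥0∞)
      = ∑' e : T.Edge, {e : T.Edge | e.1.length = n}.indicator (fun _ => 1) e :=
        tsum_congr fun e => by by_cases h : e.1.length = n <;> simp [shellIndicator, h]
    _ = ENat.card {e : T.Edge // e.1.length = n} := by rw [← tsum_subtype]; exact ENNReal.tsum_one
    _ = Nat.card (T.Shell n) := by
        rw [ENat.card_congr (T.edgeShellEquiv hn), ENat.card_eq_coe_fintype_card,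
          Nat.card_eq_fintype_card]
        rfl

theorem card_shell_one_le_tsum_of_mem_admInf {ρ : List ℕ → ℝ≥0} (hρ : ρ ∈ T.AdmInf) :
    (Nat.card (T.Shell 1) : ℝ≥0∞) ≤ ∑' e : T.Edge, (ρ e.1 : ℝ≥0∞) := by
  choose F hF hFseg using fun a : T.Shell 1 => T.exists_mem_gammaInf_seg_eq a.2.1
  have hF1 : ∀ a, seg (F a) 1 = a.1 := fun a => by simpa only [a.2.2] using hFseg a
  let φ : T.Shell 1 × ℕ → T.Edge := fun x =>
    ⟨seg (F x.1) (x.2 + 1), hF x.1 (x.2 + 1), List.ne_nil_of_length_pos (by simp [seg_length])⟩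
  -- paths through distinct edges of `S_1` are edge-disjoint
  have hφ : Function.Injective φ := by
    rintro ⟨a, n⟩ ⟨b, m⟩ h
    have hseg : seg (F a) (n + 1) = seg (F b) (m + 1) := congrArg Subtype.val h
    have hnm : n = m := by simpa [seg_length] using congrArg List.length hseg
    have hab : a = b := Subtype.ext <| by
      rw [← hF1 a, ← hF1 b]
      simpa [take_seg] using congrArg (List.take 1) hseg
    rw [hab, hnm]
  have : Fintype (T.Shell 1) := Fintype.ofFinite _
  calc (Nat.card (T.Shell 1) : ℝ≥0∞) = ∑' _ : T.Shell 1, 1 := by simp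
    _ ≤ ∑' a, lenInf ρ (F a) := ENNReal.tsum_le_tsum fun a => hρ _ (hF a)
    _ = ∑' x : T.Shell 1 × ℕ, (ρ (φ x).1 : ℝ≥0∞) := ENNReal.tsum_prod.symm
    _ ≤ ∑' e : T.Edge, (ρ e.1 : ℝ≥0∞) := ENNReal.tsum_comp_le_tsum_of_injective hφ _

end PTree

/-- for the constant weight `σ ≡ 1`, the `1`-modulus of `Γ_∞`
equals the number of edges in the first shell `S_1`. -/
theorem stmt11 (T : PTree) :
    T.ModInf 1 (fun _ => 1) =
      (Nat.card {e : List ℕ // T.mem e ∧ e.length = 1} : ℝ≥0∞) := by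
  refine le_antisymm ?_ (le_iInf₂ fun ρ hρ => ?_)
  · calc T.ModInf 1 (fun _ => 1) ≤ T.energy 1 (fun _ => 1) (shellIndicator 1) :=
          iInf₂_le _ (T.shellIndicator_mem_admInf one_ne_zero)
      _ = Nat.card (T.Shell 1) := by rw [PTree.energy_one_one, T.tsum_shellIndicator one_ne_zero]
  · rw [PTree.energy_one_one]
    exact T.card_shell_one_le_tsum_of_mem_admInf hρ
end

section
/- Let s : {1,2,...} → ℕ satisfy s_k ≥ 1 and let σ : {1,2,...} → ℝ satisfy σ_k > 0. Let p_0 ∈ (1,∞) and suppose there is ε > 0 with [p_0−ε, p_0+ε] ⊂ (1,∞) such that M_p(σ,s) > 0 for all p ∈ [p_0−ε, p_0+ε]. Then the function p ↦ M_p(σ,s) is continuous at p_0. -/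
/-!
With `wₖ = sₖ σₖ`, Hölder's inequality gives `M_p = (∑ₖ wₖ^(-1/(p-1)))^(1-p)` for `p > 1`,
equality being approached by the densities `ρₖ ∝ wₖ^(-1/(p-1))` truncated to finitely many
shells. Positivity of `M_p` at `p₀ ± ε` thus means that `∑ₖ wₖ^x` converges at the two endpoint
exponents. As `x ↦ wₖ^x` is monotone, each term at an intermediate exponent is bounded by the sum
of the two endpoint terms, so by the Weierstrass M-test the series, and with it `M_p`, is
continuous in `p` near `p₀`.
-/

open scoped ENNReal NNReal

open Filter Set

theorem ENNReal.tsum_mul_le_Lp_mul_Lq {ι : Type*} (f g : ι → ℝ≥0∞) {p q : ℝ}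
    (hpq : p.HolderConjugate q) :
    ∑' i, f i * g i ≤ (∑' i, f i ^ p) ^ (1 / p) * (∑' i, g i ^ q) ^ (1 / q) := by
  rw [ENNReal.tsum_eq_iSup_sum]
  refine iSup_le fun F => (ENNReal.inner_le_Lp_mul_Lq F f g hpq).trans ?_
  gcongr
  all_goals first
    | exact ENNReal.sum_le_tsum F | exact hpq.one_div_nonneg | exact hpq.symm.one_div_nonneg

variable {ι : Type*}

theorem Real.rpow_le_rpow_add_rpow_of_mem_Icc {W x α β : ℝ} (hW : 0 < W) (hx : x ∈ Icc α β) :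
    W ^ x ≤ W ^ α + W ^ β := by
  rcases le_or_gt 1 W with h1 | h1
  · exact (Real.rpow_le_rpow_of_exponent_le h1 hx.2).trans
      (le_add_of_nonneg_left (Real.rpow_nonneg hW.le α))
  · exact (Real.rpow_le_rpow_of_exponent_ge hW h1.le hx.1).trans
      (le_add_of_nonneg_right (Real.rpow_nonneg hW.le β))

section
variable {W : ι → ℝ} {α β : ℝ}

theorem summable_rpow_of_mem_Icc (hW : ∀ k, 0 < W k) (hα : Summable fun k => W k ^ α)
    (hβ : Summable fun k => W k ^ β) {x : ℝ} (hx : x ∈ Icc α β) :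
    Summable fun k => W k ^ x :=
  (hα.add hβ).of_nonneg_of_le (fun k => Real.rpow_nonneg (hW k).le x)
    fun k => Real.rpow_le_rpow_add_rpow_of_mem_Icc (hW k) hx

theorem continuousOn_tsum_rpow (hW : ∀ k, 0 < W k) (hα : Summable fun k => W k ^ α)
    (hβ : Summable fun k => W k ^ β) :
    ContinuousOn (fun x => ∑' k, W k ^ x) (Icc α β) :=
  continuousOn_tsum (fun k => (Real.continuous_const_rpow (hW k).ne').continuousOn) (hα.add hβ)
    fun k _ hx => by
      rw [Real.norm_of_nonneg (Real.rpow_nonneg (hW k).le _)]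
      exact Real.rpow_le_rpow_add_rpow_of_mem_Icc (hW k) hx

end

section
variable {w : ι → ℝ≥0} {x : ℝ}

theorem summable_rpow_of_tsum_coe_rpow_ne_top (hw : ∀ k, w k ≠ 0)
    (h : ∑' k, (w k : ℝ≥0∞) ^ x ≠ ∞) : Summable fun k => (w k : ℝ) ^ x := by
  simp only [← ENNReal.coe_rpow_of_ne_zero (hw _), ENNReal.tsum_coe_ne_top_iff_summable] at h
  simpa only [NNReal.coe_rpow] using NNReal.summable_coe.2 h

theorem tsum_coe_rpow_eq_ofReal (hw : ∀ k, w k ≠ 0) (h : Summable fun k => (w k : ℝ) ^ x) :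
    ∑' k, (w k : ℝ≥0∞) ^ x = ENNReal.ofReal (∑' k, (w k : ℝ) ^ x) := by
  rw [ENNReal.ofReal_tsum_of_nonneg (fun k => Real.rpow_nonneg (w k).coe_nonneg x) h]
  congr 1 with k
  rw [← ENNReal.ofReal_rpow_of_pos (NNReal.coe_pos.2 (pos_iff_ne_zero.2 (hw k))),
    ENNReal.ofReal_coe_nnreal]

end

noncomputable def weightedModulus (w : ι → ℝ≥0) (p : ℝ) : ℝ≥0∞ :=
  ⨅ ρ ∈ {ρ : ι → ℝ≥0 | 1 ≤ ∑' k, (ρ k : ℝ≥0∞)}, ∑' k, (w k : ℝ≥0∞) * (ρ k : ℝ≥0∞) ^ p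

namespace weightedModulus

variable {w : ι → ℝ≥0} {p : ℝ}

theorem le_tsum {ρ : ι → ℝ≥0∞} (hρ : ∀ k, ρ k ≠ ∞) (h : 1 ≤ ∑' k, ρ k) :
    weightedModulus w p ≤ ∑' k, (w k : ℝ≥0∞) * ρ k ^ p := by
  have hρ' : ∀ k, ((ρ k).toNNReal : ℝ≥0∞) = ρ k := fun k => ENNReal.coe_toNNReal (hρ k)
  refine iInf₂_le_of_le (fun k => (ρ k).toNNReal) ?_ ?_
  · simpa [hρ'] using h
  · simp [hρ']

theorem le_sum_rpow (hw : ∀ k, w k ≠ 0) (hp : 1 < p) (F : Finset ι) :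
    weightedModulus w p ≤ (∑ k ∈ F, (w k : ℝ≥0∞) ^ (-(p - 1)⁻¹)) ^ (1 - p) := by
  classical
  set S := ∑ k ∈ F, (w k : ℝ≥0∞) ^ (-(p - 1)⁻¹)
  have hp0 : 0 < p := by linarith
  rcases eq_or_ne S 0 with hS0 | hS0
  · simp [hS0, ENNReal.zero_rpow_of_neg (by linarith : 1 - p < 0)]
  have hw' : ∀ k, (w k : ℝ≥0∞) ≠ 0 := fun k => ENNReal.coe_ne_zero.2 (hw k)
  have hterm : ∀ k, (w k : ℝ≥0∞) ^ (-(p - 1)⁻¹) ≠ ∞ := fun k =>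
    ENNReal.rpow_ne_top_of_ne_zero (hw' k) ENNReal.coe_ne_top
  have hSt : S ≠ ∞ := ENNReal.sum_ne_top.2 fun k _ => hterm k
  have tsum_ite (g : ι → ℝ≥0∞) : ∑' k, (if k ∈ F then g k else 0) = ∑ k ∈ F, g k := by
    rw [tsum_eq_sum (s := F) fun k hk => if_neg hk]
    exact Finset.sum_congr rfl fun k hk => if_pos hk
  set ρ : ι → ℝ≥0∞ := fun k => if k ∈ F then (w k : ℝ≥0∞) ^ (-(p - 1)⁻¹) / S else 0
  have hρ : ∀ k, ρ k ≠ ∞ := fun k => by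
    by_cases hk : k ∈ F
    · simpa [ρ, hk] using ENNReal.div_ne_top (hterm k) hS0
    · simp [ρ, hk]
  have hsum : 1 ≤ ∑' k, ρ k := by
    rw [tsum_ite]
    simp only [div_eq_mul_inv, ← Finset.sum_mul]
    exact (ENNReal.mul_inv_cancel hS0 hSt).ge
  have henergy : ∀ k, (w k : ℝ≥0∞) * ρ k ^ p =
      if k ∈ F then (w k : ℝ≥0∞) ^ (-(p - 1)⁻¹) / S ^ p else 0 := fun k => by
    by_cases hk : k ∈ F
    · simp only [ρ, hk, if_true]
      rw [ENNReal.div_rpow_of_nonneg _ _ hp0.le, ← ENNReal.rpow_mul, ← mul_div_assoc]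
      congr 1
      have hexp : -(p - 1)⁻¹ = 1 + -(p - 1)⁻¹ * p := by
        field_simp [(by linarith : p - 1 ≠ 0)]
        ring
      conv_rhs => rw [hexp, ENNReal.rpow_add _ _ (hw' k) ENNReal.coe_ne_top, ENNReal.rpow_one]
    · simp [ρ, hk, ENNReal.zero_rpow_of_pos hp0]
  calc weightedModulus w p ≤ ∑' k, (w k : ℝ≥0∞) * ρ k ^ p := le_tsum hρ hsum
    _ = S / S ^ p := by
      rw [tsum_congr henergy, tsum_ite]
      simp only [S, div_eq_mul_inv, ← Finset.sum_mul]
    _ = S ^ (1 - p) := by rw [ENNReal.rpow_sub _ _ hS0 hSt, ENNReal.rpow_one]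

theorem le_rpow_tsum (hw : ∀ k, w k ≠ 0) (hp : 1 < p) :
    weightedModulus w p ≤ (∑' k, (w k : ℝ≥0∞) ^ (-(p - 1)⁻¹)) ^ (1 - p) :=
  ge_of_tendsto ((ENNReal.continuous_rpow_const.tendsto _).comp ENNReal.summable.hasSum)
    (Eventually.of_forall (le_sum_rpow hw hp))

theorem rpow_tsum_le (hw : ∀ k, w k ≠ 0) (hp : 1 < p) :
    (∑' k, (w k : ℝ≥0∞) ^ (-(p - 1)⁻¹)) ^ (1 - p) ≤ weightedModulus w p := by
  refine le_iInf₂ fun ρ hρ => ?_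
  set S := ∑' k, (w k : ℝ≥0∞) ^ (-(p - 1)⁻¹)
  set E := ∑' k, (w k : ℝ≥0∞) * (ρ k : ℝ≥0∞) ^ p
  have hp0 : 0 < p := by linarith
  have hpq := Real.HolderConjugate.conjExponent hp
  have hw' : ∀ k, (w k : ℝ≥0∞) ≠ 0 := fun k => ENNReal.coe_ne_zero.2 (hw k)
  have holder : (1 : ℝ≥0∞) ≤ E ^ (1 / p) * S ^ (1 / p.conjExponent) := by
    calc (1 : ℝ≥0∞) ≤ ∑' k, (ρ k : ℝ≥0∞) := hρ
      _ = ∑' k, (w k : ℝ≥0∞) ^ (1 / p) * ρ k * (w k : ℝ≥0∞) ^ (-(1 / p)) := by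
        congr 1 with k
        rw [mul_right_comm, ← ENNReal.rpow_add _ _ (hw' k) ENNReal.coe_ne_top, add_neg_cancel,
          ENNReal.rpow_zero, one_mul]
      _ ≤ E ^ (1 / p) * S ^ (1 / p.conjExponent) := by
        refine (ENNReal.tsum_mul_le_Lp_mul_Lq _ _ hpq).trans_eq ?_
        congr 3 <;> ext k
        · rw [ENNReal.mul_rpow_of_nonneg _ _ hp0.le, ← ENNReal.rpow_mul, one_div_mul_cancel hp0.ne',
            ENNReal.rpow_one]
        · rw [← ENNReal.rpow_mul, Real.conjExponent]
          congr 1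
          field_simp
  have holder_pow : 1 ≤ E * S ^ (p - 1) := by
    have := ENNReal.rpow_le_rpow holder hp0.le
    rwa [ENNReal.one_rpow, ENNReal.mul_rpow_of_nonneg _ _ hp0.le, ← ENNReal.rpow_mul,
      ← ENNReal.rpow_mul, one_div_mul_cancel hp0.ne', ENNReal.rpow_one, one_div_mul_eq_div,
      hpq.div_conj_eq_sub_one] at this
  have hE : E ≠ 0 := by rintro h; simp [h] at holder_pow
  have hS : S ^ (p - 1) ≠ 0 := by rintro h; simp [h] at holder_pow
  rw [show 1 - p = -(p - 1) by ring, ENNReal.rpow_neg,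
    ENNReal.inv_le_iff_le_mul (fun _ => hS) (fun _ => hE), mul_comm]
  exact holder_pow

theorem eq_rpow_tsum (hw : ∀ k, w k ≠ 0) (hp : 1 < p) :
    weightedModulus w p = (∑' k, (w k : ℝ≥0∞) ^ (-(p - 1)⁻¹)) ^ (1 - p) :=
  (le_rpow_tsum hw hp).antisymm (rpow_tsum_le hw hp)

theorem tsum_rpow_ne_top_of_pos (hw : ∀ k, w k ≠ 0) (hp : 1 < p) (h : 0 < weightedModulus w p) :
    ∑' k, (w k : ℝ≥0∞) ^ (-(p - 1)⁻¹) ≠ ∞ := by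
  intro htop
  have := le_rpow_tsum hw hp
  rw [htop, ENNReal.top_rpow_of_neg (by linarith)] at this
  exact h.ne' (le_antisymm this bot_le)

theorem continuousAt [Nonempty ι] (hw : ∀ k, w k ≠ 0)
    {a b p₀ : ℝ} (ha : 1 < a) (hap : a < p₀) (hpb : p₀ < b)
    (hMa : 0 < weightedModulus w a) (hMb : 0 < weightedModulus w b) :
    ContinuousAt (weightedModulus w) p₀ := by
  set e : ℝ → ℝ := fun p => -(p - 1)⁻¹
  set R : ℝ → ℝ := fun x => ∑' k, (w k : ℝ) ^ x
  have hW : ∀ k, 0 < (w k : ℝ) := fun k => NNReal.coe_pos.2 (pos_iff_ne_zero.2 (hw k))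
  have he_lt : ∀ {x y}, 1 < x → x < y → e x < e y := fun hx hxy =>
    neg_lt_neg (inv_strictAnti₀ (sub_pos.2 hx) (by linarith))
  have he_le : ∀ {x y}, 1 < x → x ≤ y → e x ≤ e y := fun hx hxy =>
    neg_le_neg (inv_anti₀ (sub_pos.2 hx) (by linarith))
  have hsa := summable_rpow_of_tsum_coe_rpow_ne_top hw (tsum_rpow_ne_top_of_pos hw ha hMa)
  have hsb := summable_rpow_of_tsum_coe_rpow_ne_top hw
    (tsum_rpow_ne_top_of_pos hw (by linarith) hMb)
  have hsum : ∀ p ∈ Icc a b, Summable fun k => (w k : ℝ) ^ e p := fun p hp =>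
    summable_rpow_of_mem_Icc hW hsa hsb ⟨he_le ha hp.1, he_le (by linarith [hp.1]) hp.2⟩
  have hRpos : ∀ p ∈ Icc a b, 0 < R (e p) := fun p hp =>
    (hsum p hp).tsum_pos (fun k => (Real.rpow_pos_of_pos (hW k) _).le) (Classical.arbitrary ι)
      (Real.rpow_pos_of_pos (hW _) _)
  have hR : ContinuousAt R (e p₀) :=
    (continuousOn_tsum_rpow hW hsa hsb).continuousAt
      (Icc_mem_nhds (he_lt ha hap) (he_lt (by linarith) hpb))
  have he : ContinuousAt e p₀ :=
    ((continuousAt_id.sub continuousAt_const).inv₀ (sub_pos.2 (ha.trans hap)).ne').neg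
  have hcont : ContinuousAt (fun p => ENNReal.ofReal (R (e p) ^ (1 - p))) p₀ :=
    ENNReal.continuous_ofReal.continuousAt.comp
      ((hR.comp he).rpow (continuousAt_const.sub continuousAt_id)
        (Or.inl (hRpos p₀ ⟨hap.le, hpb.le⟩).ne'))
  refine hcont.congr ?_
  filter_upwards [Icc_mem_nhds hap hpb] with p hp
  rw [eq_rpow_tsum hw (ha.trans_le hp.1), tsum_coe_rpow_eq_ofReal hw (hsum p hp),
    ENNReal.ofReal_rpow_of_pos (hRpos p hp)]

end weightedModulus

theorem Mmod_eq_weightedModulus (p : ℝ) (σ : ℕ → ℝ≥0) (s : ℕ → ℕ) :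
    Mmod p σ s = weightedModulus (fun k => (s k : ℝ≥0) * σ k) p := by
  simp [Mmod, weightedModulus]

/-- if the modulus is positive on a closed interval
`[p₀ - ε, p₀ + ε] ⊂ (1, ∞)`, then `p ↦ M_p(σ, s)` is continuous at `p₀`. -/
theorem stmt13 (s : ℕ → ℕ) (hs : ∀ k, 1 ≤ s k) (σ : ℕ → ℝ≥0) (hσ : ∀ k, 0 < σ k)
    (p₀ ε : ℝ) (hε : 0 < ε) (h1 : 1 < p₀ - ε)
    (hpos : ∀ p ∈ Set.Icc (p₀ - ε) (p₀ + ε), 0 < Mmod p σ s) :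
    ContinuousAt (fun p : ℝ => Mmod p σ s) p₀ := by
  have hw : ∀ k, (s k : ℝ≥0) * σ k ≠ 0 := fun k =>
    mul_ne_zero (Nat.cast_ne_zero.2 (Nat.one_le_iff_ne_zero.1 (hs k))) (hσ k).ne'
  simp only [Mmod_eq_weightedModulus] at hpos ⊢
  exact weightedModulus.continuousAt hw h1 (by linarith) (by linarith)
    (hpos _ ⟨le_rfl, by linarith⟩) (hpos _ ⟨by linarith, le_rfl⟩)
end
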